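/- Let s > s̃ > 0, let ψ and ψ̃ be inner functions, and define u(z) = (s² - s̃²)ψ(z)/(s - s̃ z ψ(z) ψ̃(z)) for z in the unit disk, and h(z) = 1/(s - s̃ z ψ(z) ψ̃(z)). Then H_u h = sψh, H_u² h = s² h, and K_u u = s̃ ψ̃ u, K_u² u = s̃² u, where H_u is the anti-linear Hankel operator with symbol u and K_u = S*H_u. -/

import Mathlib

open MeasureTheory Complex Real ComplexConjugate AddCircle

noncomputable section

instance fact2pi : Fact (0 < 2 * π) := ⟨by positivity⟩

abbrev Tc : Type := AddCircle (2 * π)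

abbrev haarT : Measure Tc := haarAddCircle

abbrev HL2 : Type := Lp ℂ 2 haarT

def IsHardy (f : HL2) : Prop := ∀ n : ℤ, n < 0 → fourierCoeff (⇑f) n = 0

def IsHardyFun (u : Tc → ℂ) : Prop := ∀ n : ℤ, n < 0 → fourierCoeff u n = 0

def IsInnerF (θ : Tc → ℂ) : Prop :=
  AEStronglyMeasurable θ haarT ∧ (∀ᵐ x ∂haarT, ‖θ x‖ = 1) ∧ IsHardyFun θ

def IsHankelOp (u : Tc → ℂ) (H : HL2 → HL2) : Prop :=
  MemLp u 2 haarT ∧ IsHardyFun u ∧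
  (∃ C : ℝ, ∀ f, ‖H f‖ ≤ C * ‖f‖) ∧
  (∀ f g, H (f + g) = H f + H g) ∧
  (∀ (c : ℂ) (f : HL2), H (c • f) = conj c • H f) ∧
  (∀ f, IsHardy (H f)) ∧
  (∀ f g : HL2, IsHardy g →
    Integrable (fun x => u x * conj (f x) * conj (g x)) haarT →
    (inner ℂ g (H f) : ℂ) = ∫ x, u x * conj (f x) * conj (g x) ∂haarT)

def IsShiftAdjOf (H K : HL2 → HL2) : Prop :=
  ∀ f, IsHardy (K f) ∧
    ∀ n : ℤ, 0 ≤ n → fourierCoeff (⇑(K f)) n = fourierCoeff (⇑(H f)) (n + 1)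

def IsSzego (P : HL2 →L[ℂ] HL2) : Prop :=
  (∀ f, IsHardy (P f)) ∧ ∀ f g : HL2, IsHardy g → (inner ℂ g (f - P f) : ℂ) = 0

def MemKz (θ : Tc → ℂ) (f : HL2) : Prop :=
  IsHardy f ∧ ∀ h w : HL2, IsHardy h →
    (⇑w =ᵐ[haarT] fun x => fourier 1 x * θ x * h x) → (inner ℂ w f : ℂ) = 0

def MemK (θ : Tc → ℂ) (f : HL2) : Prop :=
  IsHardy f ∧ ∀ h w : HL2, IsHardy h →
    (⇑w =ᵐ[haarT] fun x => θ x * h x) → (inner ℂ w f : ℂ) = 0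

/-!
Write `ζ = z ψ ψ̃`, an inner function, so that `h = 1 / (s - s̃ ζ)` and `u = (s² - s̃²) ψ h`.
Since `|ζ| = 1`, `conj h = ζ / (s ζ - s̃)`, and the partial-fraction identity
`(s² - s̃²) ζ / ((s - s̃ ζ)(s ζ - s̃)) = s / (s - s̃ ζ) + s̃ / (s ζ - s̃)` becomes
`(s² - s̃²) |h|² = s h + s̃ conj (ζ h)`. Hence, on the circle,

  `u conj h = s ψ h + conj (z · s̃ ψ̃ h)`,  `u conj u = z · s̃ ψ̃ u + conj (s² - s̃² + z · s̃ ψ̃ u)`.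

The function `h` lies in `H²` (it is the Neumann series `∑ s̃ᵏ ζᵏ / sᵏ⁺¹`), so the conjugated
terms have no Fourier coefficients of index `≥ 0` (resp. `≥ 1`): projecting onto `H²` gives
`H_u h = s ψ h` and `K_u u = s̃ ψ̃ u`. Multiplying the two identities by `conj (s ψ)` and
`s̃ conj ψ̃` and using `|ψ| = |ψ̃| = 1` gives the same structure again, whence
`H_u² h = s² h` and `K_u² u = s̃² u`.
-/

open Filter

@[simp]
lemma norm_fourier_apply {T : ℝ} (n : ℤ) (x : AddCircle T) : ‖fourier n x‖ = 1 :=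
  Circle.norm_coe _

section FourierCoeff

variable {T : ℝ} [Fact (0 < T)]

lemma fourierCoeff_fourier_mul (k : ℤ) (F : AddCircle T → ℂ) (n : ℤ) :
    fourierCoeff (fun x => fourier k x * F x) n = fourierCoeff F (n - k) := by
  unfold fourierCoeff
  congr 1; ext x
  rw [smul_eq_mul, smul_eq_mul, ← mul_assoc, ← fourier_add]
  congr 3; ring

lemma fourierCoeff_conj (F : AddCircle T → ℂ) (n : ℤ) :
    fourierCoeff (fun x => conj (F x)) n = conj (fourierCoeff F (-n)) := by
  simp only [fourierCoeff, smul_eq_mul, ← integral_conj, map_mul, neg_neg, ← fourier_neg]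

lemma norm_fourierCoeff_le (F : AddCircle T → ℂ) (n : ℤ) :
    ‖fourierCoeff F n‖ ≤ ∫ x, ‖F x‖ ∂haarAddCircle := by
  refine (norm_integral_le_integral_norm _).trans_eq ?_
  simp only [smul_eq_mul, norm_mul, norm_fourier_apply, one_mul]

lemma integral_mul_eq_tsum_fourierCoeff {F G : AddCircle T → ℂ}
    (hF : MemLp F 2 haarAddCircle) (hG : MemLp G 2 haarAddCircle) :
    ∫ x, F x * G x ∂haarAddCircle = ∑' m : ℤ, fourierCoeff F (-m) * fourierCoeff G m := by
  have hFc : MemLp (fun x => conj (F x)) 2 haarAddCircle :=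
    hF.of_le (RCLike.continuous_conj.comp_aestronglyMeasurable hF.1)
      (.of_forall fun x => by rw [RCLike.norm_conj])
  have hinner : ∫ x, F x * G x ∂haarAddCircle = inner ℂ (hFc.toLp _) (hG.toLp _) := by
    rw [MeasureTheory.L2.inner_def]
    refine (integral_congr_ae ?_).symm
    filter_upwards [hFc.coeFn_toLp, hG.coeFn_toLp] with x h1 h2
    simp [h1, h2, mul_comm]
  rw [hinner, ← fourierBasis.repr.inner_map_map, lp.inner_eq_tsum]
  congr 1; ext m
  rw [RCLike.inner_apply, fourierBasis_repr, fourierBasis_repr,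
    fourierCoeff_congr_ae hFc.coeFn_toLp, fourierCoeff_congr_ae hG.coeFn_toLp, fourierCoeff_conj]
  simp [mul_comm]

end FourierCoeff

def MemH2 (F : Tc → ℂ) : Prop := MemLp F 2 haarT ∧ IsHardyFun F

lemma memH2_const (c : ℂ) : MemH2 fun _ => c := by
  refine ⟨memLp_const c, fun n hn => ?_⟩
  have hc : (fun _ : Tc => c) = fun x => c * fourier 0 x := by simp
  rw [hc, fourierCoeff.const_mul, fourierCoeff_fourier, Pi.single_apply, if_neg hn.ne, mul_zero]

lemma MemH2.const_mul {F : Tc → ℂ} (hF : MemH2 F) (c : ℂ) : MemH2 fun x => c * F x :=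
  ⟨hF.1.const_mul c, fun n hn => by rw [fourierCoeff.const_mul, hF.2 n hn, mul_zero]⟩

lemma MemH2.add {F G : Tc → ℂ} (hF : MemH2 F) (hG : MemH2 G) : MemH2 fun x => F x + G x :=
  ⟨hF.1.add hG.1, fun n hn => by
    rw [show (fun x => F x + G x) = F + G from rfl,
      fourierCoeff.add (hF.1.integrable one_le_two) (hG.1.integrable one_le_two),
      Pi.add_apply, hF.2 n hn, hG.2 n hn, add_zero]⟩

lemma MemH2.isHardyFun_mul {F G : Tc → ℂ} (hF : MemH2 F) (hG : MemH2 G) :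
    IsHardyFun fun x => F x * G x := by
  intro n hn
  have hF' : MemLp (fun x => fourier (-n) x * F x) 2 haarT :=
    hF.1.of_le ((map_continuous (fourier (-n))).aestronglyMeasurable.mul hF.1.1)
      (.of_forall fun x => by rw [norm_mul, norm_fourier_apply, one_mul])
  have hterm : ∀ m : ℤ,
      fourierCoeff (fun x => fourier (-n) x * F x) (-m) * fourierCoeff G m = 0 := by
    intro m
    rcases le_or_gt 0 m with hm | hm
    · rw [fourierCoeff_fourier_mul, hF.2 _ (by omega), zero_mul]
    · rw [hG.2 m hm, mul_zero]
  calc fourierCoeff (fun x => F x * G x) n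
      = ∫ x, (fourier (-n) x * F x) * G x ∂haarT := by
        simp only [fourierCoeff, smul_eq_mul, mul_assoc]
    _ = 0 := by rw [integral_mul_eq_tsum_fourierCoeff hF' hG.1, tsum_congr hterm, tsum_zero]

lemma isInnerF_one : IsInnerF fun _ => 1 :=
  ⟨aestronglyMeasurable_const, .of_forall fun _ => norm_one, (memH2_const 1).2⟩

lemma isInnerF_fourier_one : IsInnerF fun x => fourier 1 x := by
  refine ⟨(map_continuous _).aestronglyMeasurable, .of_forall (norm_fourier_apply 1), fun n hn => ?_⟩
  rw [fourierCoeff_fourier, Pi.single_apply, if_neg (by omega)]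

lemma IsInnerF.memLp {θ : Tc → ℂ} (hθ : IsInnerF θ) : MemLp θ 2 haarT :=
  .of_bound hθ.1 1 (hθ.2.1.mono fun _ hx => hx.le)

lemma IsInnerF.memH2 {θ : Tc → ℂ} (hθ : IsInnerF θ) : MemH2 θ := ⟨hθ.memLp, hθ.2.2⟩

lemma IsInnerF.memLp_mul {θ F : Tc → ℂ} (hθ : IsInnerF θ) (hF : MemLp F 2 haarT) :
    MemLp (fun x => θ x * F x) 2 haarT :=
  hF.of_le (hθ.1.mul hF.1) (hθ.2.1.mono fun x hx => by rw [norm_mul, hx, one_mul])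

lemma IsInnerF.memH2_mul {θ F : Tc → ℂ} (hθ : IsInnerF θ) (hF : MemH2 F) :
    MemH2 fun x => θ x * F x :=
  ⟨hθ.memLp_mul hF.1, hθ.memH2.isHardyFun_mul hF⟩

lemma IsInnerF.memH2_const_mul {θ F : Tc → ℂ} (hθ : IsInnerF θ) (hF : MemH2 F) (c : ℂ) :
    MemH2 fun x => c * θ x * F x := by
  simpa only [mul_assoc] using (hθ.memH2_mul hF).const_mul c

lemma IsInnerF.mul {θ φ : Tc → ℂ} (hθ : IsInnerF θ) (hφ : IsInnerF φ) :
    IsInnerF fun x => θ x * φ x :=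
  ⟨hθ.1.mul hφ.1, (hθ.2.1.and hφ.2.1).mono fun x hx => by rw [norm_mul, hx.1, hx.2, mul_one],
    hθ.memH2.isHardyFun_mul hφ.memH2⟩

lemma HL2.ext_fourierCoeff {f g : HL2} (h : ∀ n, fourierCoeff f n = fourierCoeff g n) :
    f = g :=
  fourierBasis.repr.injective <| lp.ext <| funext fun n => by
    rw [fourierBasis_repr, fourierBasis_repr, h n]

lemma IsHardy.ae_eq_of_fourierCoeff_eq {f : HL2} (hf : IsHardy f) {F : Tc → ℂ} (hF : MemH2 F)
    (h : ∀ n, 0 ≤ n → fourierCoeff f n = fourierCoeff F n) : ⇑f =ᵐ[haarT] F := by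
  suffices f = hF.1.toLp F from this ▸ hF.1.coeFn_toLp
  refine HL2.ext_fourierCoeff fun n => ?_
  rw [fourierCoeff_congr_ae hF.1.coeFn_toLp]
  rcases lt_or_ge n 0 with hn | hn
  · rw [hf n hn, hF.2 n hn]
  · exact h n hn

lemma IsHardyFun.fourierCoeff_conj_eq_zero {G : Tc → ℂ} (hG : IsHardyFun G) {m : ℤ}
    (hm : 0 < m) : fourierCoeff (fun x => conj (G x)) m = 0 := by
  rw [fourierCoeff_conj, hG _ (by omega), map_zero]

lemma IsHardyFun.fourierCoeff_conj_fourier_one_mul_eq_zero {G : Tc → ℂ} (hG : IsHardyFun G)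
    {m : ℤ} (hm : 0 ≤ m) : fourierCoeff (fun x => conj (fourier 1 x * G x)) m = 0 := by
  simp only [map_mul, ← fourier_neg]
  rw [fourierCoeff_fourier_mul, hG.fourierCoeff_conj_eq_zero (by omega)]

lemma fourierCoeff_add_conj {F G : Tc → ℂ} (hF : MemLp F 2 haarT) (hG : MemLp G 2 haarT)
    (n : ℤ) : fourierCoeff (fun x => F x + conj (G x)) n
      = fourierCoeff F n + fourierCoeff (fun x => conj (G x)) n :=
  congrFun (fourierCoeff.add (hF.integrable one_le_two) (hG.star.integrable one_le_two)) n

namespace IsHankelOp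

variable {u : Tc → ℂ} {H : HL2 → HL2} {C : ℝ}

lemma fourierCoeff_apply (hH : IsHankelOp u H) (hu : ∀ᵐ x ∂haarT, ‖u x‖ ≤ C) (f : HL2)
    {m : ℤ} (hm : 0 ≤ m) :
    fourierCoeff (H f) m = fourierCoeff (fun x => u x * conj (f x)) m := by
  let e : HL2 := fourierLp 2 m
  have he : IsHardy e := fun n hn => by
    rw [fourierCoeff_congr_ae (coeFn_fourierLp 2 m), fourierCoeff_fourier, Pi.single_apply,
      if_neg (by omega)]
  obtain ⟨hu2, -, -, -, -, -, hpair⟩ := hH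
  have hint : Integrable (fun x => u x * conj (f x) * conj (e x)) haarT := by
    have hfe : Integrable (fun x => conj (f x) * conj (e x)) haarT :=
      (Lp.memLp f).star.integrable_mul (Lp.memLp e).star
    simpa only [mul_assoc] using hfe.bdd_mul hu2.1 hu
  calc fourierCoeff (H f) m = inner ℂ e (H f) := by
        rw [← fourierBasis_repr, fourierBasis.repr_apply_apply, coe_fourierBasis]
    _ = ∫ x, u x * conj (f x) * conj (e x) ∂haarT := hpair f e he hint
    _ = fourierCoeff (fun x => u x * conj (f x)) m := by
        refine integral_congr_ae ?_
        filter_upwards [coeFn_fourierLp 2 m] with x hx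
        rw [hx, ← fourier_neg, smul_eq_mul, mul_comm]

lemma ae_eq_of_mul_conj_ae_eq (hH : IsHankelOp u H) (hu : ∀ᵐ x ∂haarT, ‖u x‖ ≤ C) {f : HL2} {F G : Tc → ℂ} (hF : MemH2 F)
    (hG : MemH2 G)
    (hfFG : (fun x => u x * conj (f x)) =ᵐ[haarT] fun x => F x + conj (fourier 1 x * G x)) :
    ⇑(H f) =ᵐ[haarT] F :=
  (hH.2.2.2.2.2.1 f).ae_eq_of_fourierCoeff_eq hF fun n hn => by
    rw [hH.fourierCoeff_apply hu f hn, fourierCoeff_congr_ae hfFG,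
      fourierCoeff_add_conj hF.1 (isInnerF_fourier_one.memH2_mul hG).1,
      hG.2.fourierCoeff_conj_fourier_one_mul_eq_zero hn, add_zero]

end IsHankelOp

lemma IsShiftAdjOf.ae_eq_of_mul_conj_ae_eq {u : Tc → ℂ} {H K : HL2 → HL2}
    (hK : IsShiftAdjOf H K) (hH : IsHankelOp u H) {C : ℝ} (hu : ∀ᵐ x ∂haarT, ‖u x‖ ≤ C)
    {f : HL2} {F G : Tc → ℂ} (hF : MemH2 F) (hG : MemH2 G)
    (hfFG : (fun x => u x * conj (f x)) =ᵐ[haarT] fun x => fourier 1 x * F x + conj (G x)) :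
    ⇑(K f) =ᵐ[haarT] F :=
  (hK f).1.ae_eq_of_fourierCoeff_eq hF fun n hn => by
    rw [(hK f).2 n hn, hH.fourierCoeff_apply hu f (by omega), fourierCoeff_congr_ae hfFG,
      fourierCoeff_add_conj (isInnerF_fourier_one.memH2_mul hF).1 hG.1,
      hG.2.fourierCoeff_conj_eq_zero (by omega), add_zero, fourierCoeff_fourier_mul,
      add_sub_cancel_right]

lemma fourierCoeff_mul_eq_of_ae_eq_add_mul {θ φ F G : Tc → ℂ} {c : ℂ} (hθ : IsInnerF θ)
    (hφ : IsInnerF φ) (hG : MemH2 G) (hF : MemLp F 2 haarT)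
    (hFG : F =ᵐ[haarT] fun x => G x + c * (θ x * F x)) {n : ℤ} (hn : n < 0) :
    fourierCoeff (fun x => φ x * F x) n = c * fourierCoeff (fun x => (φ x * θ x) * F x) n := by
  have hφF : (fun x => φ x * F x) =ᵐ[haarT]
      (fun x => φ x * G x) + fun x => c * ((φ x * θ x) * F x) := by
    filter_upwards [hFG] with x hx
    conv_lhs => rw [hx]
    simp only [Pi.add_apply]; ring
  rw [fourierCoeff_congr_ae hφF, fourierCoeff.add ((hφ.memH2_mul hG).1.integrable one_le_two)
    ((((hφ.mul hθ).memLp_mul hF).integrable one_le_two).const_mul c), Pi.add_apply,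
    (hφ.memH2_mul hG).2 n hn, zero_add, fourierCoeff.const_mul]

lemma isHardyFun_of_ae_eq_add_mul {θ F G : Tc → ℂ} {c : ℂ} (hθ : IsInnerF θ) (hc : ‖c‖ < 1)
    (hG : MemH2 G) (hF : MemLp F 2 haarT)
    (hFG : F =ᵐ[haarT] fun x => G x + c * (θ x * F x)) : IsHardyFun F := by
  have hbound : ∀ k : ℕ, ∀ φ : Tc → ℂ, IsInnerF φ → ∀ n < 0,
      ‖fourierCoeff (fun x => φ x * F x) n‖ ≤ ‖c‖ ^ k * ∫ x, ‖F x‖ ∂haarT := by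
    intro k
    induction k with
    | zero =>
      intro φ hφ n _
      refine (norm_fourierCoeff_le _ n).trans_eq ?_
      rw [pow_zero, one_mul]
      refine integral_congr_ae ?_
      filter_upwards [hφ.2.1] with x hx
      rw [norm_mul, hx, one_mul]
    | succ k ih =>
      intro φ hφ n hn
      rw [fourierCoeff_mul_eq_of_ae_eq_add_mul hθ hφ hG hF hFG hn, norm_mul, pow_succ',
        mul_assoc]
      exact mul_le_mul_of_nonneg_left (ih _ (hφ.mul hθ) n hn) (norm_nonneg c)
  intro n hn
  have hlim : Tendsto (fun k : ℕ => ‖c‖ ^ k * ∫ x, ‖F x‖ ∂haarT) atTop (nhds 0) := by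
    simpa using (tendsto_pow_atTop_nhds_zero_of_lt_one (norm_nonneg c) hc).mul_const
      (∫ x, ‖F x‖ ∂haarT)
  have hle := ge_of_tendsto' hlim fun k => hbound k _ isInnerF_one n hn
  simpa only [one_mul, norm_le_zero_iff] using hle

section Algebra

variable {s st : ℝ} {a b c v U G : ℂ}

lemma conj_mul_of_norm_eq_one {w : ℂ} (hw : ‖w‖ = 1) : conj w * w = 1 := by
  rw [Complex.conj_mul', hw]; norm_num

lemma sub_le_norm_sub_mul (hst : 0 ≤ st) (ha : ‖a‖ = 1) (hb : ‖b‖ = 1) (hc : ‖c‖ = 1) :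
    s - st ≤ ‖(s : ℂ) - st * a * b * c‖ :=
  calc s - st ≤ ‖(s : ℂ)‖ - ‖(st : ℂ) * a * b * c‖ := by
        simp only [norm_mul, ha, hb, hc, mul_one, Complex.norm_real, Real.norm_eq_abs,
          abs_of_nonneg hst]
        linarith [le_abs_self s]
    _ ≤ _ := norm_sub_norm_le _ _

lemma sub_mul_ne_zero (hst : 0 ≤ st) (hss : st < s) (ha : ‖a‖ = 1) (hb : ‖b‖ = 1)
    (hc : ‖c‖ = 1) : (s : ℂ) - st * a * b * c ≠ 0 :=
  norm_pos_iff.mp <| (sub_pos.mpr hss).trans_le (sub_le_norm_sub_mul hst ha hb hc)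

lemma mul_conj_const_mul_mul (hb : ‖b‖ = 1) (h : U * conj v = s * b * v + conj (a * G)) :
    U * conj (s * b * v) = (s : ℂ) ^ 2 * v + conj (a * (s * b * G)) := by
  simp only [map_mul, Complex.conj_ofReal] at h ⊢
  linear_combination s * conj b * h + s ^ 2 * v * conj_mul_of_norm_eq_one hb

lemma mul_conj_const_mul_self (hc : ‖c‖ = 1) (h : U * conj U = a * (st * c * U) + conj G) :
    U * conj (st * c * U) = a * ((st : ℂ) ^ 2 * U) + conj (st * c * G) := by
  simp only [map_mul, Complex.conj_ofReal] at h ⊢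
  linear_combination st * conj c * h + st ^ 2 * a * U * conj_mul_of_norm_eq_one hc

end Algebra

namespace TwoSingularValues

section Pointwise

variable {s st : ℝ} {a b c v : ℂ}

lemma norm_le_one_div_sub (hst : 0 ≤ st) (hss : st < s) (ha : ‖a‖ = 1) (hb : ‖b‖ = 1) (hc : ‖c‖ = 1)
    (hv : ((s : ℂ) - st * a * b * c) * v = 1) : ‖v‖ ≤ 1 / (s - st) := by
  have hD := sub_le_norm_sub_mul (s := s) hst ha hb hc
  have hnorm := congrArg norm hv
  rw [norm_mul, norm_one] at hnorm
  rw [le_div_iff₀ (by linarith)]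
  nlinarith [norm_nonneg v]

lemma eq_one_div_add_mul (hs : s ≠ 0) (hv : ((s : ℂ) - st * a * b * c) * v = 1) :
    v = 1 / s + st / s * (a * b * c * v) := by
  have hs' : (s : ℂ) ≠ 0 := Complex.ofReal_ne_zero.mpr hs
  field_simp
  linear_combination hv

lemma sq_sub_sq_mul_mul_conj (ha : ‖a‖ = 1) (hb : ‖b‖ = 1) (hc : ‖c‖ = 1)
    (hv : ((s : ℂ) - st * a * b * c) * v = 1) :
    ((s : ℂ) ^ 2 - (st : ℂ) ^ 2) * v * conj v = s * v + st * conj (a * b * c * v) := by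
  have hv' := congrArg conj hv
  simp only [map_mul, map_sub, map_one, Complex.conj_ofReal] at hv' ⊢
  linear_combination s * v * hv' + st * conj a * conj b * conj c * conj v * hv
    + st ^ 2 * v * conj v * (conj b * b * conj c * c * conj_mul_of_norm_eq_one ha
      + conj c * c * conj_mul_of_norm_eq_one hb + conj_mul_of_norm_eq_one hc)

lemma symbol_mul_conj (ha : ‖a‖ = 1) (hb : ‖b‖ = 1) (hc : ‖c‖ = 1)
    (hv : ((s : ℂ) - st * a * b * c) * v = 1) :
    ((s : ℂ) ^ 2 - (st : ℂ) ^ 2) * b * v * conj v = s * b * v + conj (a * (st * c * v)) := by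
  have hcore := sq_sub_sq_mul_mul_conj ha hb hc hv
  simp only [map_mul, Complex.conj_ofReal] at hcore ⊢
  linear_combination b * hcore + st * conj a * conj c * conj v * conj_mul_of_norm_eq_one hb

lemma symbol_mul_conj_symbol (ha : ‖a‖ = 1) (hb : ‖b‖ = 1) (hc : ‖c‖ = 1)
    (hv : ((s : ℂ) - st * a * b * c) * v = 1) :
    ((s : ℂ) ^ 2 - (st : ℂ) ^ 2) * b * v * conj (((s : ℂ) ^ 2 - (st : ℂ) ^ 2) * b * v)
      = a * (st * c * (((s : ℂ) ^ 2 - (st : ℂ) ^ 2) * b * v))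
        + conj (((s : ℂ) ^ 2 - (st : ℂ) ^ 2)
          + a * (st * c * (((s : ℂ) ^ 2 - (st : ℂ) ^ 2) * b * v))) := by
  have hcore := sq_sub_sq_mul_mul_conj ha hb hc hv
  simp only [map_mul, map_add, map_sub, map_pow, Complex.conj_ofReal] at hcore ⊢
  linear_combination ((s : ℂ) ^ 2 - (st : ℂ) ^ 2) ^ 2 * v * conj v * conj_mul_of_norm_eq_one hb
    + ((s : ℂ) ^ 2 - (st : ℂ) ^ 2) * hcore + ((s : ℂ) ^ 2 - (st : ℂ) ^ 2) * hv

end Pointwise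

variable {s st : ℝ} {ψ ψt : Tc → ℂ} {u h : HL2}

lemma ae_sub_mul_h_eq_one (hst : 0 < st) (hss : st < s) (hψ : IsInnerF ψ) (hψt : IsInnerF ψt)
    (hh : ⇑h =ᵐ[haarT] fun x => 1 / ((s : ℂ) - (st : ℂ) * fourier 1 x * ψ x * ψt x)) :
    ∀ᵐ x ∂haarT, ((s : ℂ) - st * fourier 1 x * ψ x * ψt x) * h x = 1 := by
  filter_upwards [hh, hψ.2.1, hψt.2.1] with x hx hb hc
  rw [hx]
  exact mul_one_div_cancel (sub_mul_ne_zero hst.le hss (norm_fourier_apply 1 x) hb hc)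

lemma ae_u_eq
    (hu : ⇑u =ᵐ[haarT] fun x =>
      ((s : ℂ) ^ 2 - (st : ℂ) ^ 2) * ψ x / ((s : ℂ) - (st : ℂ) * fourier 1 x * ψ x * ψt x))
    (hh : ⇑h =ᵐ[haarT] fun x => 1 / ((s : ℂ) - (st : ℂ) * fourier 1 x * ψ x * ψt x)) :
    ⇑u =ᵐ[haarT] fun x => ((s : ℂ) ^ 2 - (st : ℂ) ^ 2) * ψ x * h x := by
  filter_upwards [hu, hh] with x hux hhx
  rw [hux, hhx, mul_one_div]

lemma memH2_h (hst : 0 < st) (hss : st < s) (hψ : IsInnerF ψ) (hψt : IsInnerF ψt)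
    (hD : ∀ᵐ x ∂haarT, ((s : ℂ) - st * fourier 1 x * ψ x * ψt x) * h x = 1) :
    MemH2 h := by
  refine ⟨Lp.memLp h, isHardyFun_of_ae_eq_add_mul ((isInnerF_fourier_one.mul hψ).mul hψt)
    (c := st / s) ?_ (memH2_const (1 / s)) (Lp.memLp h) ?_⟩
  · rw [norm_div, Complex.norm_real, Complex.norm_real, Real.norm_eq_abs, Real.norm_eq_abs,
      abs_of_pos hst, abs_of_pos (hst.trans hss), div_lt_one (hst.trans hss)]
    exact hss
  · filter_upwards [hD] with x hx
    exact eq_one_div_add_mul (hst.trans hss).ne' hx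

lemma ae_norm_u_le (hst : 0 < st) (hss : st < s) (hψ : IsInnerF ψ) (hψt : IsInnerF ψt)
    (hD : ∀ᵐ x ∂haarT, ((s : ℂ) - st * fourier 1 x * ψ x * ψt x) * h x = 1)
    (hu : ⇑u =ᵐ[haarT] fun x => ((s : ℂ) ^ 2 - (st : ℂ) ^ 2) * ψ x * h x) :
    ∀ᵐ x ∂haarT, ‖u x‖ ≤ ‖(s : ℂ) ^ 2 - (st : ℂ) ^ 2‖ * (1 / (s - st)) := by
  filter_upwards [hu, hD, hψ.2.1, hψt.2.1] with x hux hx hb hc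
  rw [hux, norm_mul, norm_mul, hb, mul_one]
  gcongr
  exact norm_le_one_div_sub hst.le hss (norm_fourier_apply 1 x) hb hc hx

lemma ae_u_mul_conj_h (hψ : IsInnerF ψ) (hψt : IsInnerF ψt)
    (hD : ∀ᵐ x ∂haarT, ((s : ℂ) - st * fourier 1 x * ψ x * ψt x) * h x = 1)
    (hu : ⇑u =ᵐ[haarT] fun x => ((s : ℂ) ^ 2 - (st : ℂ) ^ 2) * ψ x * h x) :
    (fun x => u x * conj (h x)) =ᵐ[haarT]
    fun x => s * ψ x * h x + conj (fourier 1 x * (st * ψt x * h x)) := by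
  filter_upwards [hu, hD, hψ.2.1, hψt.2.1] with x hux hx hb hc
  rw [hux]
  exact symbol_mul_conj (norm_fourier_apply 1 x) hb hc hx

lemma ae_u_mul_conj_u (hψ : IsInnerF ψ) (hψt : IsInnerF ψt)
    (hD : ∀ᵐ x ∂haarT, ((s : ℂ) - st * fourier 1 x * ψ x * ψt x) * h x = 1)
    (hu : ⇑u =ᵐ[haarT] fun x => ((s : ℂ) ^ 2 - (st : ℂ) ^ 2) * ψ x * h x) :
    (fun x => u x * conj (u x)) =ᵐ[haarT] fun x =>
    fourier 1 x * (st * ψt x * u x)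
      + conj (((s : ℂ) ^ 2 - (st : ℂ) ^ 2) + fourier 1 x * (st * ψt x * u x)) := by
  filter_upwards [hu, hD, hψ.2.1, hψt.2.1] with x hux hx hb hc
  rw [hux]
  exact symbol_mul_conj_symbol (norm_fourier_apply 1 x) hb hc hx

end TwoSingularValues

open TwoSingularValues

/-- for `s > s̃ > 0` and inner functions `ψ, ψ̃`, the symbol
`u = (s² - s̃²)ψ/(s - s̃ z ψ ψ̃)` and `h = 1/(s - s̃ z ψ ψ̃)` satisfy
`H_u h = sψh`, `H_u² h = s²h`, `K_u u = s̃ψ̃u` and `K_u² u = s̃²u`. -/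
theorem example_two_singular_values
    (s st : ℝ) (hst : 0 < st) (hss : st < s)
    (ψ ψt : Tc → ℂ) (hψ : IsInnerF ψ) (hψt : IsInnerF ψt)
    (u h : HL2)
    (hu : ⇑u =ᵐ[haarT] fun x =>
      ((s : ℂ) ^ 2 - (st : ℂ) ^ 2) * ψ x / ((s : ℂ) - (st : ℂ) * fourier 1 x * ψ x * ψt x))
    (hh : ⇑h =ᵐ[haarT] fun x =>
      1 / ((s : ℂ) - (st : ℂ) * fourier 1 x * ψ x * ψt x))
    (H K : HL2 → HL2) (hH : IsHankelOp (⇑u) H) (hK : IsShiftAdjOf H K) :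
    (⇑(H h) =ᵐ[haarT] fun x => (s : ℂ) * ψ x * h x) ∧
    H (H h) = ((s : ℂ) ^ 2) • h ∧
    (⇑(K u) =ᵐ[haarT] fun x => (st : ℂ) * ψt x * u x) ∧
    K (K u) = ((st : ℂ) ^ 2) • u := by
  have hD := ae_sub_mul_h_eq_one hst hss hψ hψt hh
  have hu' := ae_u_eq hu hh
  have hub := ae_norm_u_le hst hss hψ hψt hD hu'
  have hhH := memH2_h hst hss hψ hψt hD
  have huH : MemH2 u := ⟨Lp.memLp u, hH.2.1⟩
  have hA := ae_u_mul_conj_h hψ hψt hD hu'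
  have hHh := hH.ae_eq_of_mul_conj_ae_eq hub (hψ.memH2_const_mul hhH s)
    (hψt.memH2_const_mul hhH st) hA
  have hHHh := hH.ae_eq_of_mul_conj_ae_eq hub (hhH.const_mul ((s : ℂ) ^ 2))
    (hψ.memH2_const_mul (hψt.memH2_const_mul hhH st) s) (by
      filter_upwards [hA, hHh, hψ.2.1] with x hAx hx hb
      rw [hx]
      exact mul_conj_const_mul_mul hb hAx)
  have hFu := hψt.memH2_const_mul huH st
  have hGu := (memH2_const ((s : ℂ) ^ 2 - (st : ℂ) ^ 2)).add
    (isInnerF_fourier_one.memH2_mul hFu)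
  have hB := ae_u_mul_conj_u hψ hψt hD hu'
  have hKu := hK.ae_eq_of_mul_conj_ae_eq hH hub hFu hGu hB
  have hKKu := hK.ae_eq_of_mul_conj_ae_eq hH hub (huH.const_mul ((st : ℂ) ^ 2))
    (hψt.memH2_const_mul hGu st) (by
      filter_upwards [hB, hKu, hψt.2.1] with x hBx hx hc
      rw [hx]
      exact mul_conj_const_mul_self hc hBx)
  exact ⟨hHh, Lp.ext (hHHh.trans (Lp.coeFn_smul ((s : ℂ) ^ 2) h).symm), hKu,
    Lp.ext (hKKu.trans (Lp.coeFn_smul ((st : ℂ) ^ 2) u).symm)⟩
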